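/- Fix an integer r ≥ 3. For every ε > 0 there exists m₀ such that for all integers m ≥ m₀ the following holds: there exist real coefficients α₁,…,α_{r−1} such that (i) each row s₁,…,s_r of A(m) satisfies the linear inequality Σ_{i=1}^{r−1} Σ_{j∈L(i)} α_i·ξ_j ≤ Σ_{i=1}^{r−1} α_i·σ(i) with equality, and (ii) the number of 0/1 vectors (ξ₁,…,ξ_M) ∈ {0,1}^M satisfying this inequality is at most 2^{(H_r + ε)·M}. -/

import Mathlib

open Filter
open scoped BigOperators

/-- The binary entropy function `h(ξ) = ξ log₂(1/ξ) + (1-ξ) log₂(1/(1-ξ))`. -/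
noncomputable def binEnt (x : ℝ) : ℝ :=
  x * Real.logb 2 x⁻¹ + (1 - x) * Real.logb 2 (1 - x)⁻¹

/-- `H_r = (1/(2^r-2)) ∑_{i=1}^{r-1} C(r,i) h(i/r)`. -/
noncomputable def Hent (r : ℕ) : ℝ :=
  (1 / ((2 : ℝ) ^ r - 2)) * ∑ i ∈ Finset.Icc 1 (r - 1), (r.choose i : ℝ) * binEnt ((i : ℝ) / r)

/-- The number of ones of a 0/1 vector. -/
def ones {r : ℕ} (v : Fin r → Bool) : ℕ := (Finset.univ.filter fun i => v i = true).card

/-!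
Take `αᵢ = log₂((r - i)/i)`, the log-odds of `i/r`, and give a column `j ∈ L(i)` the
coefficient `aⱼ = αᵢ` and the parameter `pⱼ = i/r`. Each row of `A(m)` has exactly `σ(i)` ones
in `L(i)`, so it satisfies the inequality with equality, and hence the threshold `Σ αᵢ σ(i)` is
also the average of the row sums, `Σⱼ aⱼ pⱼ`. Under the product Bernoulli measure with
`P(ξⱼ = 1) = pⱼ`, a vector `ξ` has probability `2^(Σⱼ log₂(1 - pⱼ) - Σⱼ aⱼ ξⱼ)`, which for a
solution is at least `2^(-Σⱼ h(pⱼ)) = 2^(-H_r M)`; as the probabilities sum to `1`, there are at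
most `2^(H_r M)` solutions.
-/

open Finset

noncomputable def logOdds (x : ℝ) : ℝ := Real.logb 2 ((1 - x) / x)

lemma logb_one_sub_sub_logOdds_mul {x : ℝ} (hx0 : 0 < x) (hx1 : x < 1) :
    Real.logb 2 (1 - x) - logOdds x * x = -binEnt x := by
  rw [logOdds, binEnt, Real.logb_div (by linarith) hx0.ne', Real.logb_inv, Real.logb_inv]
  ring

lemma ite_eq_two_rpow_logOdds {x : ℝ} (hx0 : 0 < x) (hx1 : x < 1) (b : Bool) :
    (if b then x else 1 - x) = 2 ^ (Real.logb 2 (1 - x) - logOdds x * (if b then 1 else 0)) := by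
  cases b
  · simp [Real.rpow_logb two_pos (by norm_num) (by linarith : 0 < 1 - x)]
  · rw [if_pos rfl, if_pos rfl, mul_one, logOdds, Real.logb_div (by linarith) hx0.ne',
      sub_sub_cancel, Real.rpow_logb two_pos (by norm_num) hx0]

theorem ncard_le_two_rpow_sum_binEnt {ι : Type*} [Fintype ι] (p : ι → ℝ)
    (hp : ∀ j, p j ∈ Set.Ioo 0 1) :
    ({ξ : ι → Bool | ∑ j, logOdds (p j) * (if ξ j then 1 else 0) ≤ ∑ j, logOdds (p j) * p j}.ncard
      : ℝ) ≤ 2 ^ ∑ j, binEnt (p j) := by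
  classical
  set S : Finset (ι → Bool) :=
    {ξ | ∑ j, logOdds (p j) * (if ξ j then 1 else 0) ≤ ∑ j, logOdds (p j) * p j}
  let b : ι → Bool → ℝ := fun j x => if x then p j else 1 - p j
  let w : (ι → Bool) → ℝ := fun ξ => ∏ j, b j (ξ j)
  have hw_sum : ∑ ξ, w ξ = 1 := by
    rw [← Fintype.prod_sum b]
    simp [b]
  have hw : ∀ ξ, w ξ =
      2 ^ ∑ j, (Real.logb 2 (1 - p j) - logOdds (p j) * (if ξ j then 1 else 0)) := by
    intro ξ
    rw [Real.rpow_sum_of_pos two_pos]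
    exact prod_congr rfl fun j _ => ite_eq_two_rpow_logOdds (hp j).1 (hp j).2 _
  have hw_ge : ∀ ξ ∈ S, 2 ^ (-∑ j, binEnt (p j)) ≤ w ξ := by
    intro ξ hξ
    rw [hw, ← sum_neg_distrib]
    refine Real.rpow_le_rpow_of_exponent_le one_le_two ?_
    rw [← sum_congr rfl fun j _ => logb_one_sub_sub_logOdds_mul (hp j).1 (hp j).2, sum_sub_distrib,
      sum_sub_distrib]
    linarith [(mem_filter.1 hξ).2]
  have hS : (#S : ℝ) * 2 ^ (-∑ j, binEnt (p j)) ≤ 1 := calc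
    _ ≤ ∑ ξ ∈ S, w ξ := by simpa using card_nsmul_le_sum S w _ hw_ge
    _ ≤ ∑ ξ, w ξ := sum_le_sum_of_subset_of_nonneg (subset_univ _) fun ξ _ _ => by
      rw [hw]; positivity
    _ = 1 := hw_sum
  rw [Real.rpow_neg two_pos.le, ← div_eq_mul_inv, div_le_one (by positivity)] at hS
  rwa [Set.ncard_eq_toFinset_card', Set.toFinset_ofPred]

theorem Finset.card_filter_mem_powersetCard_succ {α : Type*} [DecidableEq α] {t : Finset α}
    {a : α} (ha : a ∈ t) (k : ℕ) :
    #{s ∈ t.powersetCard (k + 1) | a ∈ s} = (#t - 1).choose k := by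
  have hnot : a ∉ t.erase a := notMem_erase a t
  rw [← insert_erase ha, powersetCard_succ_insert hnot, filter_union,
    filter_false_of_mem fun s hs => fun has => hnot (mem_powersetCard.1 hs |>.1 has),
    empty_union, filter_true_of_mem fun s hs => by
      obtain ⟨u, -, rfl⟩ := mem_image.1 hs; exact mem_insert_self a u,
    card_image_of_injOn, card_powersetCard, card_insert_of_notMem hnot, Nat.add_sub_cancel]
  intro u hu v hv huv
  have hau : a ∉ u := fun h => hnot (mem_powersetCard.1 hu |>.1 h)
  have hav : a ∉ v := fun h => hnot (mem_powersetCard.1 hv |>.1 h)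
  simpa [erase_insert hau, erase_insert hav] using congrArg (·.erase a) huv

def boolFunEquivFinset (α : Type*) [Fintype α] [DecidableEq α] : (α → Bool) ≃ Finset α where
  toFun v := {a | v a = true}
  invFun s a := decide (a ∈ s)
  left_inv v := by funext a; simp
  right_inv s := by ext a; simp

lemma card_filter_ones_eq (r k : ℕ) : #{v : Fin r → Bool | ones v = k} = r.choose k := by
  rw [card_equiv (boolFunEquivFinset (Fin r)) (t := powersetCard k univ) fun v => by
      simp only [mem_filter]; simp [ones, boolFunEquivFinset],
    card_powersetCard, card_univ, Fintype.card_fin]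

lemma card_filter_ones_eq_succ_and (r k : ℕ) (i : Fin r) :
    #{v : Fin r → Bool | ones v = k + 1 ∧ v i = true} = (r - 1).choose k := by
  rw [card_equiv (boolFunEquivFinset (Fin r)) (t := {s ∈ powersetCard (k + 1) univ | i ∈ s})
      fun v => by simp only [mem_filter]; simp [ones, boolFunEquivFinset],
    card_filter_mem_powersetCard_succ (mem_univ i), card_univ, Fintype.card_fin]

def nonconst (r : ℕ) : Finset (Fin r → Bool) := {fun _ => false, fun _ => true}ᶜ

lemma card_nonconst {r : ℕ} (hr : 0 < r) : #(nonconst r) = 2 ^ r - 2 := by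
  have hne : (fun _ : Fin r => false) ≠ fun _ => true := fun h => by
    simpa using congrFun h ⟨0, hr⟩
  rw [nonconst, card_compl, card_pair hne, Fintype.card_fun, Fintype.card_bool, Fintype.card_fin]

lemma ones_le {r : ℕ} (v : Fin r → Bool) : ones v ≤ r := by
  simpa [ones] using card_filter_le univ fun i => v i = true

lemma ones_eq_zero_iff {r : ℕ} {v : Fin r → Bool} : ones v = 0 ↔ v = fun _ => false := by
  simp [ones, funext_iff]

lemma ones_eq_self_iff {r : ℕ} {v : Fin r → Bool} : ones v = r ↔ v = fun _ => true := by
  have h := card_filter_eq_iff (s := univ) (p := fun i : Fin r => v i = true)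
  rw [card_fin] at h
  simp [ones, h, funext_iff]

lemma mem_nonconst_iff {r : ℕ} {v : Fin r → Bool} : v ∈ nonconst r ↔ ones v ∈ Icc 1 (r - 1) := by
  have := ones_le v
  simp only [nonconst, mem_compl, mem_insert, mem_singleton, not_or, mem_Icc,
    ← ones_eq_zero_iff, ← ones_eq_self_iff]
  omega

lemma sum_nonconst_eq_sum_Icc {r : ℕ} (F : (Fin r → Bool) → ℝ) :
    ∑ v ∈ nonconst r, F v = ∑ k ∈ Icc 1 (r - 1), ∑ v with ones v = k, F v := by
  rw [sum_fiberwise_eq_sum_filter]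
  exact sum_congr (by ext v; simp [mem_nonconst_iff]) fun _ _ => rfl

lemma sum_nonconst_ones {r : ℕ} (g : ℕ → ℝ) :
    ∑ v ∈ nonconst r, g (ones v) = ∑ k ∈ Icc 1 (r - 1), (r.choose k : ℝ) * g k := by
  rw [sum_nonconst_eq_sum_Icc]
  refine sum_congr rfl fun k _ => ?_
  rw [sum_congr rfl fun v hv => by rw [(mem_filter.1 hv).2], sum_const, card_filter_ones_eq,
    nsmul_eq_mul]

lemma sum_nonconst_ones_mul_apply {r : ℕ} (g : ℕ → ℝ) (i : Fin r) :
    ∑ v ∈ nonconst r, g (ones v) * (if v i then 1 else 0) =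
      ∑ k ∈ Icc 1 (r - 1), g k * ((r - 1).choose (k - 1) : ℝ) := by
  rw [sum_nonconst_eq_sum_Icc]
  refine sum_congr rfl fun k hk => ?_
  obtain ⟨k, rfl⟩ := Nat.exists_eq_add_of_le' (mem_Icc.1 hk).1
  rw [sum_congr rfl fun v hv => by rw [(mem_filter.1 hv).2]]
  simp only [mul_ite, mul_one, mul_zero]
  rw [← sum_filter, filter_filter, sum_const, card_filter_ones_eq_succ_and, nsmul_eq_mul,
    Nat.add_sub_cancel, mul_comm]

lemma sum_ite_eq_ones {r : ℕ} (v : Fin r → Bool) : ∑ i, (if v i then (1 : ℝ) else 0) = ones v := by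
  simp [sum_boole, ones]

def HasNonconstMultiplicity (m : ℕ) {r M : ℕ} (col : Fin M → Fin r → Bool) : Prop :=
  ∀ v : Fin r → Bool, v ≠ (fun _ => false) → v ≠ (fun _ => true) → {j | col j = v}.ncard = m

section Columns

variable {r m : ℕ} {col : Fin ((2 ^ r - 2) * m) → Fin r → Bool}

lemma HasNonconstMultiplicity.card_fiber (hcol : HasNonconstMultiplicity m col) {v : Fin r → Bool}
    (hv : v ∈ nonconst r) : #{j | col j = v} = m := by
  simp only [nonconst, mem_compl, mem_insert, mem_singleton, not_or] at hv
  have h := hcol v hv.1 hv.2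
  rwa [Set.ncard_eq_toFinset_card', Set.toFinset_ofPred] at h

lemma HasNonconstMultiplicity.col_mem_nonconst (hr : 0 < r) (hcol : HasNonconstMultiplicity m col)
    (j : Fin ((2 ^ r - 2) * m)) : col j ∈ nonconst r := by
  have hcard : #{j | col j ∈ nonconst r} = #(univ : Finset (Fin ((2 ^ r - 2) * m))) := by
    rw [card_eq_sum_card_fiberwise (f := col) (t := nonconst r) fun j hj => by simpa using hj]
    rw [sum_congr rfl fun v hv => ?_, sum_const, card_nonconst hr, smul_eq_mul, card_univ,
      Fintype.card_fin]
    refine (congrArg card ?_).trans (hcol.card_fiber hv)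
    ext j
    simp only [mem_filter, mem_univ, true_and, and_iff_right_iff_imp]
    rintro rfl
    exact hv
  simpa using (Finset.ext_iff.1 (eq_univ_of_card _ hcard) j).2 (mem_univ j)

lemma HasNonconstMultiplicity.sum_comp (hr : 0 < r) (hcol : HasNonconstMultiplicity m col)
    (f : (Fin r → Bool) → ℝ) : ∑ j, f (col j) = m * ∑ v ∈ nonconst r, f v := by
  rw [← sum_fiberwise_of_maps_to (g := col) (t := nonconst r) fun j _ => hcol.col_mem_nonconst hr j,
    mul_sum]
  refine sum_congr rfl fun v hv => ?_
  rw [sum_congr rfl fun j hj => by rw [(mem_filter.1 hj).2], sum_const, hcol.card_fiber hv,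
    nsmul_eq_mul]

lemma HasNonconstMultiplicity.sum_row (hr : 0 < r) (hcol : HasNonconstMultiplicity m col)
    (g : ℕ → ℝ) (i : Fin r) :
    ∑ j, g (ones (col j)) * (if col j i then 1 else 0) =
      ∑ k ∈ Icc 1 (r - 1), g k * (((r - 1).choose (k - 1) * m : ℕ) : ℝ) := by
  rw [hcol.sum_comp hr fun v => g (ones v) * if v i then 1 else 0, sum_nonconst_ones_mul_apply,
    mul_sum]
  refine sum_congr rfl fun k _ => ?_
  push_cast
  ring

lemma HasNonconstMultiplicity.sum_mul_ones_div (hr : 0 < r) (hcol : HasNonconstMultiplicity m col)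
    (g : ℕ → ℝ) :
    ∑ j, g (ones (col j)) * ((ones (col j) : ℝ) / r) =
      ∑ k ∈ Icc 1 (r - 1), g k * (((r - 1).choose (k - 1) * m : ℕ) : ℝ) := by
  have hrows : ∑ i : Fin r, ∑ j, g (ones (col j)) * (if col j i then 1 else 0) =
      ∑ j, g (ones (col j)) * ones (col j) := by
    rw [sum_comm]
    exact sum_congr rfl fun j _ => by rw [← mul_sum, sum_ite_eq_ones]
  simp only [hcol.sum_row hr, sum_const, card_univ, Fintype.card_fin, nsmul_eq_mul] at hrows
  simp only [mul_div_assoc', ← sum_div, ← hrows]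
  field_simp

lemma HasNonconstMultiplicity.sum_binEnt (hr : 2 ≤ r) (hcol : HasNonconstMultiplicity m col) :
    ∑ j, binEnt ((ones (col j) : ℝ) / r) = Hent r * (((2 ^ r - 2) * m : ℕ) : ℝ) := by
  have h2r : 2 ≤ 2 ^ r := Nat.le_self_pow (by omega) 2
  have h2r' : (2 : ℝ) ^ r - 2 ≠ 0 := by
    have : (2 : ℝ) ^ 2 ≤ 2 ^ r := pow_le_pow_right₀ one_le_two hr
    linarith
  rw [hcol.sum_comp (by omega) fun v => binEnt ((ones v : ℝ) / r),
    sum_nonconst_ones fun k => binEnt ((k : ℝ) / r), Hent]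
  push_cast [h2r]
  field_simp

lemma HasNonconstMultiplicity.ones_div_mem_Ioo (hr : 0 < r) (hcol : HasNonconstMultiplicity m col)
    (j : Fin ((2 ^ r - 2) * m)) : (ones (col j) : ℝ) / r ∈ Set.Ioo 0 1 := by
  have hk := mem_Icc.1 (mem_nonconst_iff.1 (hcol.col_mem_nonconst hr j))
  have hr' : (0 : ℝ) < r := by exact_mod_cast hr
  refine ⟨div_pos (by exact_mod_cast hk.1) hr', (div_lt_one hr').2 ?_⟩
  exact_mod_cast (by omega : ones (col j) < r)

end Columns

/-- The matrix `A(m)` is encoded by its columns `col : Fin M → Fin r → Bool`, so row `i` is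
`j ↦ col j i`; column `j ∈ L(i)` carries the coefficient `a (ones (col j)) = αᵢ`. -/
theorem stmt10 (r : ℕ) (hr : 3 ≤ r) (ε : ℝ) (hε : 0 < ε) :
    ∃ m₀ : ℕ, ∀ m : ℕ, m₀ ≤ m →
      ∀ col : Fin ((2 ^ r - 2) * m) → Fin r → Bool,
        (∀ v : Fin r → Bool, v ≠ (fun _ => false) → v ≠ (fun _ => true) →
          {j : Fin ((2 ^ r - 2) * m) | col j = v}.ncard = m) →
        ∃ a : ℕ → ℝ,
          (∀ i : Fin r,
              ∑ j : Fin ((2 ^ r - 2) * m),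
                  a (ones (col j)) * (if col j i then (1 : ℝ) else 0) =
                ∑ i' ∈ Finset.Icc 1 (r - 1), a i' * (((r - 1).choose (i' - 1) * m : ℕ) : ℝ)) ∧
          ({ξ : Fin ((2 ^ r - 2) * m) → Bool |
              ∑ j : Fin ((2 ^ r - 2) * m),
                  a (ones (col j)) * (if ξ j then (1 : ℝ) else 0) ≤
                ∑ i' ∈ Finset.Icc 1 (r - 1), a i' * (((r - 1).choose (i' - 1) * m : ℕ) : ℝ)}.ncard : ℝ)
            ≤ (2 : ℝ) ^ ((Hent r + ε) * (((2 ^ r - 2) * m : ℕ) : ℝ)) := by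
  refine ⟨0, fun m _ col hcol => ?_⟩
  have hr0 : 0 < r := by omega
  have hcol : HasNonconstMultiplicity m col := hcol
  let α : ℕ → ℝ := fun k => logOdds (k / r)
  refine ⟨α, hcol.sum_row hr0 α, ?_⟩
  rw [← hcol.sum_mul_ones_div hr0 α]
  calc _ ≤ (2 : ℝ) ^ ∑ j, binEnt ((ones (col j) : ℝ) / r) :=
        ncard_le_two_rpow_sum_binEnt _ (hcol.ones_div_mem_Ioo hr0)
    _ = 2 ^ (Hent r * (((2 ^ r - 2) * m : ℕ) : ℝ)) := by rw [hcol.sum_binEnt (by omega)]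
    _ ≤ 2 ^ ((Hent r + ε) * (((2 ^ r - 2) * m : ℕ) : ℝ)) :=
        Real.rpow_le_rpow_of_exponent_le one_le_two (by gcongr; linarith)
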